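/- arXiv:2306.02527 — 3 statements merged into one kernel-verified Lean document; each statement's English description precedes it below -/
import Mathlib

section
/- Suppose f is convex and 1/κ*-strongly convex in the norm induced by P*^{-1} (so that κ*·(1/2)‖∇f(x)‖²_{P*} ≥ f(x) - f(x*)). If an iterate update x_{t+1} = x_t - P_t ∇f(x_t) satisfies the Armijo condition f(x_{t+1}) ≤ f(x_t) - (1/2)‖∇f(x_t)‖²_{P_t}, and ‖∇f(x_t)‖²_{P_t} ≥ γ ‖∇f(x_t)‖²_{P*}, then f(x_{t+1}) - f(x*) ≤ (1 - γ/κ*)(f(x_t) - f(x*)). -/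
/-!
By `γ`-competitiveness, the PL-type bound for `P*` transfers to `P_t` with the loss of a
factor `γ`: the optimality gap is at most `(κ*/γ)·(1/2)‖∇f(x_t)‖²_{P_t}`. The Armijo step
removes `(1/2)‖∇f(x_t)‖²_{P_t}` from `f`, hence at least the fraction `γ/κ*` of the gap.
-/

open Matrix

theorem div_mul_le_half_of_le_mul_half_of_mul_le {gap a b κ γ : ℝ} (hκ : 0 < κ) (hγ : 0 ≤ γ)
    (hgap : gap ≤ κ * (1 / 2 * a)) (hab : γ * a ≤ b) :
    γ / κ * gap ≤ 1 / 2 * b :=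
  calc γ / κ * gap ≤ γ / κ * (κ * (1 / 2 * a)) := by gcongr
    _ = 1 / 2 * (γ * a) := by field_simp
    _ ≤ 1 / 2 * b := by gcongr

theorem sub_le_one_sub_mul_of_le_sub {x y m c δ : ℝ} (hy : y ≤ x - δ) (hδ : c * (x - m) ≤ δ) :
    y - m ≤ (1 - c) * (x - m) := by
  linarith

theorem progress_competitive_preconditioner_general {d : ℕ} (f : (Fin d → ℝ) → ℝ)
    (xstar xt xt1 : Fin d → ℝ)
    (Pstar Pt : Matrix (Fin d) (Fin d) ℝ)
    (g : Fin d → ℝ) (κ γ : ℝ) (hκ : 1 ≤ κ) (hγ : 0 < γ)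
    -- `f` is `1/κ*`-strongly convex in the norm induced by `Pstar⁻¹`, giving the PL-type bound
    (hPL : f xt - f xstar ≤ κ * (1 / 2 * (g ⬝ᵥ Pstar *ᵥ g)))
    -- Armijo condition
    (hArmijo : f xt1 ≤ f xt - 1 / 2 * (g ⬝ᵥ Pt *ᵥ g))
    -- `γ`-competitiveness
    (hcomp : γ * (g ⬝ᵥ Pstar *ᵥ g) ≤ g ⬝ᵥ Pt *ᵥ g) :
    f xt1 - f xstar ≤ (1 - γ / κ) * (f xt - f xstar) :=
  sub_le_one_sub_mul_of_le_sub hArmijo <|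
    div_mul_le_half_of_le_mul_half_of_mul_le (by linarith) hγ.le hPL hcomp

/-- One-step progress guarantee of multidimensional backtracking:
an accepted Armijo step with a `γ`-competitive preconditioner contracts the
optimality gap by `(1 - γ/κ*)`. -/
theorem progress_competitive_preconditioner {d : ℕ} (f : (Fin d → ℝ) → ℝ)
    (hconv : ConvexOn ℝ Set.univ f)
    (xstar xt xt1 : Fin d → ℝ) (hmin : ∀ y, f xstar ≤ f y)
    (Pstar Pt : Matrix (Fin d) (Fin d) ℝ)
    (hPstar : Pstar.PosSemidef) (hPt : Pt.PosSemidef)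
    (g : Fin d → ℝ) (κ γ : ℝ) (hκ : 1 ≤ κ) (hγ : 0 < γ) (hγ1 : γ ≤ 1)
    -- `f` is `1/κ*`-strongly convex in the norm induced by `Pstar⁻¹`, giving the PL-type bound
    (hPL : f xt - f xstar ≤ κ * (1 / 2 * (g ⬝ᵥ Pstar *ᵥ g)))
    -- the update with gradient `g = ∇f(x_t)`
    (hupdate : xt1 = xt - Pt *ᵥ g)
    -- Armijo condition
    (hArmijo : f xt1 ≤ f xt - 1 / 2 * (g ⬝ᵥ Pt *ᵥ g))
    -- `γ`-competitiveness
    (hcomp : γ * (g ⬝ᵥ Pstar *ᵥ g) ≤ g ⬝ᵥ Pt *ᵥ g) :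
    f xt1 - f xstar ≤ (1 - γ / κ) * (f xt - f xstar) :=
  progress_competitive_preconditioner_general f xstar xt xt1 Pstar Pt g κ γ hκ hγ hPL hArmijo hcomp
end

section
/- Let b ∈ ℝ^d_{>0} and u ∈ ℝ^d_{≥0} with ⟨u, (1/(2d))b⟩ > 1. Define b⁺[i] = min(b[i], 1/u[i]). Then ∏_i b⁺[i] ≤ (1/(d+1)) ∏_i b[i], i.e., the minimum-volume enclosing box shrinks the volume by a factor of at least d+1. -/
/-!
Write `bplus i = b i / m i` with `m i = max 1 (u i * b i) ≥ 1`. Expanding the product,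
`∏ m i ≥ 1 + ∑ (m i - 1) ≥ 1 + ∑ u i * b i - d`, and the cut condition says
`∑ u i * b i > 2 d`, so `∏ m i > d + 1`.
-/

open Finset

theorem Finset.one_add_sum_le_prod_one_add {ι : Type*} (s : Finset ι) {f : ι → ℝ}
    (hf : ∀ i ∈ s, 0 ≤ f i) : 1 + ∑ i ∈ s, f i ≤ ∏ i ∈ s, (1 + f i) := by
  classical
  induction s using Finset.induction_on with
  | empty => simp
  | insert a s ha ih =>
    rw [sum_insert ha, prod_insert ha]
    have hfa : 0 ≤ f a := hf a (mem_insert_self a s)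
    have hs : 0 ≤ ∑ i ∈ s, f i := sum_nonneg fun i hi => hf i (mem_insert_of_mem hi)
    have ih := ih fun i hi => hf i (mem_insert_of_mem hi)
    calc 1 + (f a + ∑ i ∈ s, f i) ≤ (1 + f a) * (1 + ∑ i ∈ s, f i) := by nlinarith
      _ ≤ (1 + f a) * ∏ i ∈ s, (1 + f i) := by gcongr

theorem one_add_sum_sub_card_le_prod_max_one {ι : Type*} [Fintype ι] (f : ι → ℝ) :
    1 + ∑ i, f i - Fintype.card ι ≤ ∏ i, max 1 (f i) :=
  calc 1 + ∑ i, f i - Fintype.card ι ≤ 1 + ∑ i, (max 1 (f i) - 1) := by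
        have : ∑ i, f i ≤ ∑ i, max 1 (f i) := sum_le_sum fun i _ => le_max_right _ _
        simp only [sum_sub_distrib, sum_const, card_univ, nsmul_one]
        linarith
    _ ≤ ∏ i, (1 + (max 1 (f i) - 1)) :=
        univ.one_add_sum_le_prod_one_add fun i _ => sub_nonneg.mpr (le_max_left _ _)
    _ = ∏ i, max 1 (f i) := by simp

theorem min_one_div_eq_div_max_one_mul {b u : ℝ} (hb : 0 < b) (hu : 0 < u) :
    min b (1 / u) = b / max 1 (u * b) := by
  rcases le_total (u * b) 1 with h | h
  · rw [max_eq_left h, div_one, min_eq_left]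
    rwa [le_div_iff₀ hu, mul_comm]
  · rw [max_eq_right h, min_eq_right, div_mul_cancel_right₀ hb.ne', one_div]
    rwa [div_le_iff₀ hu, mul_comm]

theorem box_volume_shrinkage_general {d : ℕ} (b u : Fin d → ℝ)
    (hb : ∀ i, 0 < b i) (hu : ∀ i, 0 ≤ u i)
    (hcut : 1 < ∑ i, u i * (b i / (2 * (d : ℝ))))
    (bplus : Fin d → ℝ)
    (hbplus : ∀ i, bplus i = if u i = 0 then b i else min (b i) (1 / u i)) :
    ∏ i, bplus i ≤ (1 / ((d : ℝ) + 1)) * ∏ i, b i := by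
  have hbplus_eq : ∀ i, bplus i = b i / max 1 (u i * b i) := fun i => by
    rcases (hu i).eq_or_lt with hui | hui
    · simp [hbplus, ← hui]
    · rw [hbplus, if_neg hui.ne', min_one_div_eq_div_max_one_mul (hb i) hui]
  have hsum : 2 * (d : ℝ) < ∑ i, u i * b i := by
    simp_rw [← mul_div_assoc, ← sum_div, one_lt_div_iff] at hcut
    rcases hcut with ⟨-, h⟩ | ⟨h, -⟩
    · exact h
    · exact absurd h (not_lt.mpr (by positivity))
  have hprod : (d : ℝ) + 1 < ∏ i, max 1 (u i * b i) := by
    have := one_add_sum_sub_card_le_prod_max_one fun i => u i * b i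
    rw [Fintype.card_fin] at this
    linarith
  calc ∏ i, bplus i = (∏ i, b i) / ∏ i, max 1 (u i * b i) := by
        simp_rw [hbplus_eq, prod_div_distrib]
    _ ≤ (∏ i, b i) / ((d : ℝ) + 1) := by
        gcongr
        exact prod_nonneg fun i _ => (hb i).le
    _ = (1 / ((d : ℝ) + 1)) * ∏ i, b i := by ring

/-- Volume shrinkage for the box variant: if the half-space cuts off the
backtracked point `(1/(2d))·b`, the minimum-volume enclosing box shrinks the volume
by a factor at least `d+1`. (`1/u[i] = +∞` when `u[i] = 0`.) -/
theorem box_volume_shrinkage {d : ℕ} (hd : 0 < d) (b u : Fin d → ℝ)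
    (hb : ∀ i, 0 < b i) (hu : ∀ i, 0 ≤ u i)
    (hcut : 1 < ∑ i, u i * (b i / (2 * (d : ℝ))))
    (bplus : Fin d → ℝ)
    (hbplus : ∀ i, bplus i = if u i = 0 then b i else min (b i) (1 / u i)) :
    ∏ i, bplus i ≤ (1 / ((d : ℝ) + 1)) * ∏ i, b i :=
  box_volume_shrinkage_general b u hb hu hcut bplus hbplus
end

section
/- Let X ⊆ ℝ^d be an axis-aligned convex set (closed under coordinate sign flips) and A a positive definite matrix with X ⊆ E(A) = {x : ⟨x, Ax⟩ ≤ 1}. Then X ⊆ E(Diag(diag(A))) and Vol(E(Diag(diag(A)))) ≤ Vol(E(A)). -/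
/-!
Averaging the quadratic form of `A` over the `2 ^ d` sign flips of `x` kills the off-diagonal
terms, because distinct sign coordinates are orthogonal, and leaves the quadratic form of
`Diag(diag A)`; as every sign flip of a point of `X` lies in `E(A)`, the average is at most `1`.

For the volumes, writing `M = Bᵀ B` exhibits `E(M)` as the preimage of the unit ball under `B`,
so `Vol E(M) = Vol E(1) / √(det M)`, and it remains to show Hadamard's inequality
`det A ≤ ∏ i, A i i`. Rescaling `A` to unit diagonal, its eigenvalues `λᵢ` sum to `d`, and
`∏ λᵢ ≤ ∏ exp (λᵢ - 1) = 1`.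
-/

open Matrix MeasureTheory

variable {ι : Type*} [Fintype ι]

def signVec (s : ι → Bool) : ι → ℝ := fun i => if s i then 1 else -1

theorem sum_signVec_mul_signVec [DecidableEq ι] (i j : ι) :
    ∑ s : ι → Bool, signVec s i * signVec s j = if i = j then 2 ^ Fintype.card ι else 0 := by
  split_ifs with hij
  · subst hij
    have hsq : ∀ s : ι → Bool, signVec s i * signVec s i = 1 := fun s => by
      unfold signVec; split_ifs <;> norm_num
    simp [hsq]
  · let flip : Equiv.Perm (ι → Bool) :=
      Function.Involutive.toPerm (fun s => Function.update s i (!s i)) fun s => by simp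
    have hflip : ∀ s, signVec (flip s) i * signVec (flip s) j = -(signVec s i * signVec s j) :=
      fun s => by
        change signVec (Function.update s i (!s i)) i * signVec (Function.update s i (!s i)) j = _
        simp only [signVec, Function.update_self, Function.update_of_ne (Ne.symm hij)]
        cases s i <;> cases s j <;> norm_num
    have hsum := Equiv.sum_comp flip fun s => signVec s i * signVec s j
    simp only [hflip, Finset.sum_neg_distrib] at hsum
    linarith

namespace Matrix

def ellipsoid (A : Matrix ι ι ℝ) : Set (ι → ℝ) := {x | x ⬝ᵥ A *ᵥ x ≤ 1}

theorem sum_signVec_mul_dotProduct_mulVec [DecidableEq ι] (A : Matrix ι ι ℝ) (x : ι → ℝ) :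
    ∑ s : ι → Bool, (signVec s * x) ⬝ᵥ A *ᵥ (signVec s * x) =
      2 ^ Fintype.card ι * (x ⬝ᵥ diagonal (fun i => A i i) *ᵥ x) := by
  have expand : ∀ v : ι → ℝ, v ⬝ᵥ A *ᵥ v = ∑ i, ∑ j, v i * A i j * v j := fun v => by
    simp [dotProduct, mulVec, Finset.mul_sum, mul_assoc]
  calc ∑ s : ι → Bool, (signVec s * x) ⬝ᵥ A *ᵥ (signVec s * x)
      = ∑ s : ι → Bool, ∑ i, ∑ j, signVec s i * signVec s j * (x i * A i j * x j) := by
        simp only [expand, Pi.mul_apply]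
        congr! 3
        ring
    _ = ∑ i, ∑ j, (∑ s : ι → Bool, signVec s i * signVec s j) * (x i * A i j * x j) := by
        simp only [Finset.sum_mul]
        rw [Finset.sum_comm]
        exact Finset.sum_congr rfl fun i _ => Finset.sum_comm
    _ = ∑ i, 2 ^ Fintype.card ι * (x i * A i i * x i) := by
        simp [sum_signVec_mul_signVec]
    _ = 2 ^ Fintype.card ι * (x ⬝ᵥ diagonal (fun i => A i i) *ᵥ x) := by
        simp [Finset.mul_sum, dotProduct, mulVec_diagonal, mul_assoc, mul_left_comm]

theorem mem_ellipsoid_diagonal_of_forall_signVec_mul_mem [DecidableEq ι] {A : Matrix ι ι ℝ}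
    {x : ι → ℝ} (h : ∀ s, signVec s * x ∈ A.ellipsoid) :
    x ∈ (diagonal fun i => A i i).ellipsoid := by
  have hsum : ∑ s : ι → Bool, (signVec s * x) ⬝ᵥ A *ᵥ (signVec s * x) ≤ ∑ _s : ι → Bool, 1 :=
    Finset.sum_le_sum fun s _ => h s
  rw [sum_signVec_mul_dotProduct_mulVec] at hsum
  simpa [ellipsoid] using hsum

theorem preimage_toLin'_ellipsoid [DecidableEq ι] (A M : Matrix ι ι ℝ) :
    toLin' M ⁻¹' A.ellipsoid = (Mᵀ * A * M).ellipsoid := by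
  ext x
  simp only [ellipsoid, Set.mem_preimage, Set.mem_ofPred_eq, toLin'_apply, ← mulVec_mulVec,
    dotProduct_mulVec x, vecMul_transpose]

open scoped MatrixOrder in
theorem volume_ellipsoid [DecidableEq ι] {A : Matrix ι ι ℝ} (hA : A.PosDef) :
    volume A.ellipsoid = ENNReal.ofReal (√A.det)⁻¹ * volume (1 : Matrix ι ι ℝ).ellipsoid := by
  obtain ⟨M, hAM⟩ := CStarAlgebra.nonneg_iff_eq_star_mul_self.mp hA.posSemidef.nonneg
  rw [star_eq_conjTranspose, conjTranspose_eq_transpose_of_trivial] at hAM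
  have hdet : A.det = M.det ^ 2 := by rw [hAM, det_mul, det_transpose, sq]
  have hM : LinearMap.det (toLin' M) ≠ 0 := by
    rw [LinearMap.det_toLin']
    exact pow_ne_zero_iff two_ne_zero |>.mp (hdet ▸ hA.det_pos.ne')
  rw [hAM, ← Matrix.mul_one Mᵀ, ← preimage_toLin'_ellipsoid,
    Measure.addHaar_preimage_linearMap _ hM, LinearMap.det_toLin', Matrix.mul_one, ← hAM, hdet,
    Real.sqrt_sq_eq_abs, abs_inv]

theorem volume_ellipsoid_le_of_det_le [DecidableEq ι] {A B : Matrix ι ι ℝ} (hA : A.PosDef)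
    (hB : B.PosDef) (h : A.det ≤ B.det) : volume B.ellipsoid ≤ volume A.ellipsoid := by
  rw [volume_ellipsoid hA, volume_ellipsoid hB]
  gcongr
  exact Real.sqrt_pos.2 hA.det_pos

theorem PosSemidef.det_le_exp_trace_sub_card [DecidableEq ι] {B : Matrix ι ι ℝ}
    (hB : B.PosSemidef) : B.det ≤ Real.exp (B.trace - Fintype.card ι) := by
  have hev := hB.eigenvalues_nonneg
  calc B.det = ∏ i, hB.isHermitian.eigenvalues i := by
        simpa using hB.isHermitian.det_eq_prod_eigenvalues
    _ ≤ ∏ i, Real.exp (hB.isHermitian.eigenvalues i - 1) :=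
        Finset.prod_le_prod (fun i _ => hev i) fun i _ => by
          linarith [Real.add_one_le_exp (hB.isHermitian.eigenvalues i - 1)]
    _ = Real.exp (B.trace - Fintype.card ι) := by
        rw [← Real.exp_sum, Finset.sum_sub_distrib, hB.isHermitian.trace_eq_sum_eigenvalues]
        simp

theorem PosSemidef.det_le_one_of_diag_eq_one [DecidableEq ι] {B : Matrix ι ι ℝ}
    (hB : B.PosSemidef) (hdiag : ∀ i, B i i = 1) : B.det ≤ 1 := by
  have htr : B.trace = Fintype.card ι := by simp [trace, hdiag]
  simpa [htr] using hB.det_le_exp_trace_sub_card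

theorem PosDef.det_le_prod_diag [DecidableEq ι] {A : Matrix ι ι ℝ} (hA : A.PosDef) :
    A.det ≤ ∏ i, A i i := by
  set c : ι → ℝ := fun i => (√(A i i))⁻¹
  have hsq : ∀ i, c i * c i * A i i = 1 := fun i => by
    rw [← mul_inv, Real.mul_self_sqrt hA.diag_pos.le, inv_mul_cancel₀ hA.diag_pos.ne']
  have hB : (diagonal c * A * diagonal c).PosSemidef := by
    simpa using hA.posSemidef.conjTranspose_mul_mul_same (diagonal c)
  have hdet : (diagonal c * A * diagonal c).det * ∏ i, A i i = A.det := by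
    have hone : (∏ i, c i) * (∏ i, c i) * ∏ i, A i i = 1 := by
      rw [← Finset.prod_mul_distrib, ← Finset.prod_mul_distrib]
      exact Finset.prod_eq_one fun i _ => hsq i
    rw [det_mul, det_mul, det_diagonal]
    linear_combination A.det * hone
  rw [← hdet]
  exact mul_le_of_le_one_left (Finset.prod_nonneg fun i _ => hA.diag_pos.le)
    (hB.det_le_one_of_diag_eq_one fun i => by simp [diagonal_mul, mul_diagonal, ← hsq i]; ring)

end Matrix

theorem axis_aligned_ellipsoid_general {d : ℕ} (X : Set (Fin d → ℝ))
    (hsym : ∀ x ∈ X, ∀ s : Fin d → Bool, (fun i => (if s i then (1 : ℝ) else -1) * x i) ∈ X)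
    (A : Matrix (Fin d) (Fin d) ℝ) (hA : A.PosDef)
    (hXA : X ⊆ {x : Fin d → ℝ | x ⬝ᵥ A *ᵥ x ≤ 1}) :
    X ⊆ {x : Fin d → ℝ | x ⬝ᵥ (Matrix.diagonal fun i => A i i) *ᵥ x ≤ 1} ∧
    MeasureTheory.volume {x : Fin d → ℝ | x ⬝ᵥ (Matrix.diagonal fun i => A i i) *ᵥ x ≤ 1}
      ≤ MeasureTheory.volume {x : Fin d → ℝ | x ⬝ᵥ A *ᵥ x ≤ 1} := by
  have hD : (diagonal fun i => A i i).PosDef := PosDef.diagonal fun _ => hA.diag_pos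
  have hdet : A.det ≤ (diagonal fun i => A i i).det := by
    rw [det_diagonal]
    exact hA.det_le_prod_diag
  exact ⟨fun x hx => mem_ellipsoid_diagonal_of_forall_signVec_mul_mem fun s => hXA (hsym x hx s),
    volume_ellipsoid_le_of_det_le hA hD hdet⟩

/-- An axis-aligned convex set contained in the ellipsoid `E(A)` is also
contained in the axis-aligned ellipsoid `E(Diag(diag A))`, whose volume is at most
that of `E(A)`. -/
theorem axis_aligned_ellipsoid {d : ℕ} (X : Set (Fin d → ℝ)) (hX : Convex ℝ X)
    (hsym : ∀ x ∈ X, ∀ s : Fin d → Bool, (fun i => (if s i then (1 : ℝ) else -1) * x i) ∈ X)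
    (A : Matrix (Fin d) (Fin d) ℝ) (hA : A.PosDef)
    (hXA : X ⊆ {x : Fin d → ℝ | x ⬝ᵥ A *ᵥ x ≤ 1}) :
    X ⊆ {x : Fin d → ℝ | x ⬝ᵥ (Matrix.diagonal fun i => A i i) *ᵥ x ≤ 1} ∧
    MeasureTheory.volume {x : Fin d → ℝ | x ⬝ᵥ (Matrix.diagonal fun i => A i i) *ᵥ x ≤ 1}
      ≤ MeasureTheory.volume {x : Fin d → ℝ | x ⬝ᵥ A *ᵥ x ≤ 1} :=
  axis_aligned_ellipsoid_general X hsym A hA hXA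
end
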